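/- Let m ≥ 3, let Z ∼ N(0,1) and σ(z) = max(z,0). Then (E[(σ(Z)²/m² + 1/m)·exp(σ(Z)²/m)·1(Z>0)])² · (E[exp(σ(Z)²/m)])^{m−2} = ((m−1)²/(2^m (m−2)³ m)) · (√(m/(m−2)) + 1)^{m−2}. -/

import Mathlib

/-!
Multiplying the standard normal density by `exp (a x²)` gives the unnormalised Gaussian kernel
`exp (-(1 - 2a) x² / 2)`, so on `z > 0` both expectations are half-line Gaussian integrals
(of `1` and of `x²`), each a multiple of `(1 - 2a)^{-1/2}`, while on `z ≤ 0` the ReLU vanishes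
and contributes half the mass. For `a = 1/m` one has `(1 - 2a)^{-1/2} = √(m/(m-2))`, and the
closed form is algebra.
-/

open MeasureTheory ProbabilityTheory Real Set

theorem integral_Ioi_sq_mul_exp_neg_mul_sq {b : ℝ} (hb : 0 < b) :
    ∫ x in Ioi (0 : ℝ), x ^ 2 * exp (-b * x ^ 2) = √(π / b) / (4 * b) := by
  have h := integral_rpow_mul_exp_neg_mul_rpow two_pos (by norm_num : (-1 : ℝ) < 2) hb
  simp only [rpow_two] at h
  have hGamma : Gamma ((2 + 1) / 2) = √π / 2 := by
    rw [show ((2 : ℝ) + 1) / 2 = 1 / 2 + 1 by norm_num, Gamma_add_one (by norm_num),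
      Gamma_one_half_eq]
    ring
  have hpow : b ^ (-(2 + 1) / 2 : ℝ) = (b * √b)⁻¹ := by
    rw [show (-(2 + 1) / 2 : ℝ) = -(1 + 1 / 2) by norm_num, rpow_neg hb.le, rpow_add hb,
      rpow_one, ← sqrt_eq_rpow]
  have hsqrt : √(π / b) = √π / √b := sqrt_div' π hb.le
  have : 0 < √b := sqrt_pos.mpr hb
  rw [h, hGamma, hpow, hsqrt]
  field_simp
  ring

theorem gaussianPDFReal_zero_one_mul_exp_mul_sq (a x : ℝ) :
    gaussianPDFReal 0 1 x * exp (a * x ^ 2) =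
      (√(2 * π))⁻¹ * exp (-((1 - 2 * a) / 2) * x ^ 2) := by
  simp only [gaussianPDFReal, NNReal.coe_one, mul_one, sub_zero, mul_assoc, ← exp_add]
  ring_nf

theorem gaussianPDFReal_zero_one_mul_sq_mul_exp_mul_sq (a x : ℝ) :
    gaussianPDFReal 0 1 x * (x ^ 2 * exp (a * x ^ 2)) =
      (√(2 * π))⁻¹ * (x ^ 2 * exp (-((1 - 2 * a) / 2) * x ^ 2)) := by
  rw [mul_left_comm, gaussianPDFReal_zero_one_mul_exp_mul_sq, mul_left_comm]

theorem integrableOn_Ioi_gaussianPDFReal_mul_exp_mul_sq {a : ℝ} (ha : a < 1 / 2) :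
    IntegrableOn (fun x ↦ gaussianPDFReal 0 1 x * exp (a * x ^ 2)) (Ioi 0) := by
  simp only [gaussianPDFReal_zero_one_mul_exp_mul_sq]
  exact ((integrable_exp_neg_mul_sq (by linarith)).const_mul _).integrableOn

theorem integrableOn_Ioi_gaussianPDFReal_mul_sq_mul_exp_mul_sq {a : ℝ} (ha : a < 1 / 2) :
    IntegrableOn (fun x ↦ gaussianPDFReal 0 1 x * (x ^ 2 * exp (a * x ^ 2))) (Ioi 0) := by
  have h := integrableOn_rpow_mul_exp_neg_mul_sq (by linarith : 0 < (1 - 2 * a) / 2)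
    (s := 2) (by norm_num)
  simp only [rpow_two] at h
  simp only [gaussianPDFReal_zero_one_mul_sq_mul_exp_mul_sq]
  exact h.const_mul _

theorem integral_Ioi_gaussianPDFReal_mul_exp_mul_sq {a : ℝ} (ha : a < 1 / 2) :
    ∫ x in Ioi (0 : ℝ), gaussianPDFReal 0 1 x * exp (a * x ^ 2) =
      (√(1 - 2 * a))⁻¹ / 2 := by
  have hr : 0 < 1 - 2 * a := by linarith
  simp only [gaussianPDFReal_zero_one_mul_exp_mul_sq, integral_const_mul, integral_gaussian_Ioi]
  rw [show π / ((1 - 2 * a) / 2) = 2 * π / (1 - 2 * a) by field_simp, sqrt_div' _ hr.le]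
  have : 0 < √(2 * π) := by positivity
  have : 0 < √(1 - 2 * a) := sqrt_pos.mpr hr
  field_simp

theorem integral_Ioi_gaussianPDFReal_mul_sq_mul_exp_mul_sq {a : ℝ} (ha : a < 1 / 2) :
    ∫ x in Ioi (0 : ℝ), gaussianPDFReal 0 1 x * (x ^ 2 * exp (a * x ^ 2)) =
      (√(1 - 2 * a))⁻¹ / (2 * (1 - 2 * a)) := by
  have hr : 0 < 1 - 2 * a := by linarith
  simp only [gaussianPDFReal_zero_one_mul_sq_mul_exp_mul_sq, integral_const_mul,
    integral_Ioi_sq_mul_exp_neg_mul_sq (half_pos hr)]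
  rw [show π / ((1 - 2 * a) / 2) = 2 * π / (1 - 2 * a) by field_simp, sqrt_div' _ hr.le]
  have : 0 < √(2 * π) := by positivity
  have : 0 < √(1 - 2 * a) := sqrt_pos.mpr hr
  field_simp
  ring

theorem integral_Iic_gaussianPDFReal_zero_one :
    ∫ x in Iic (0 : ℝ), gaussianPDFReal 0 1 x = 1 / 2 := by
  have hIoi := integral_Ioi_gaussianPDFReal_mul_exp_mul_sq (a := 0) (by norm_num)
  have hsplit := intervalIntegral.integral_Iic_add_Ioi (b := 0)
    (integrable_gaussianPDFReal 0 1).integrableOn (integrable_gaussianPDFReal 0 1).integrableOn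
  simp only [zero_mul, exp_zero, mul_one, mul_zero, sub_zero, sqrt_one, inv_one] at hIoi
  rw [integral_gaussianPDFReal_eq_one 0 one_ne_zero, hIoi] at hsplit
  linarith

theorem integral_gaussianReal_mul_ite_pos (f : ℝ → ℝ) :
    ∫ z, f z * (if 0 < z then 1 else 0) ∂gaussianReal 0 1 =
      ∫ z in Ioi 0, gaussianPDFReal 0 1 z * f z := by
  rw [integral_gaussianReal_eq_integral_smul one_ne_zero, ← integral_indicator measurableSet_Ioi]
  congr 1 with z
  by_cases hz : 0 < z <;> simp [hz]

theorem integral_exp_mul_relu_sq_gaussianReal {a : ℝ} (ha : a < 1 / 2) :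
    ∫ z, exp (a * max z 0 ^ 2) ∂gaussianReal 0 1 = (1 + (√(1 - 2 * a))⁻¹) / 2 := by
  have hIic : EqOn (fun z ↦ gaussianPDFReal 0 1 z * exp (a * max z 0 ^ 2))
      (gaussianPDFReal 0 1) (Iic 0) := fun z hz ↦ by
    simp [max_eq_right (mem_Iic.mp hz)]
  have hIoi : EqOn (fun z ↦ gaussianPDFReal 0 1 z * exp (a * max z 0 ^ 2))
      (fun z ↦ gaussianPDFReal 0 1 z * exp (a * z ^ 2)) (Ioi 0) := fun z hz ↦ by
    simp [max_eq_left (mem_Ioi.mp hz).le]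
  simp only [integral_gaussianReal_eq_integral_smul one_ne_zero, smul_eq_mul]
  rw [← intervalIntegral.integral_Iic_add_Ioi
      ((integrable_gaussianPDFReal 0 1).integrableOn.congr_fun hIic.symm measurableSet_Iic)
      ((integrableOn_Ioi_gaussianPDFReal_mul_exp_mul_sq ha).congr_fun hIoi.symm
        measurableSet_Ioi),
    setIntegral_congr_fun measurableSet_Iic hIic, setIntegral_congr_fun measurableSet_Ioi hIoi,
    integral_Iic_gaussianPDFReal_zero_one, integral_Ioi_gaussianPDFReal_mul_exp_mul_sq ha]
  ring

theorem integral_quadratic_relu_mul_exp_mul_ite_pos_gaussianReal {a : ℝ} (ha : a < 1 / 2)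
    (α β : ℝ) :
    ∫ z, (α * max z 0 ^ 2 + β) * exp (a * max z 0 ^ 2) * (if 0 < z then 1 else 0)
        ∂gaussianReal 0 1 =
      (α / (1 - 2 * a) + β) * (√(1 - 2 * a))⁻¹ / 2 := by
  have hrelu : EqOn
      (fun z ↦ gaussianPDFReal 0 1 z * ((α * max z 0 ^ 2 + β) * exp (a * max z 0 ^ 2)))
      (fun z ↦ α * (gaussianPDFReal 0 1 z * (z ^ 2 * exp (a * z ^ 2))) +
        β * (gaussianPDFReal 0 1 z * exp (a * z ^ 2))) (Ioi 0) := fun z hz ↦ by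
    simp only [max_eq_left (mem_Ioi.mp hz).le]
    ring
  rw [integral_gaussianReal_mul_ite_pos, setIntegral_congr_fun measurableSet_Ioi hrelu,
    integral_add ((integrableOn_Ioi_gaussianPDFReal_mul_sq_mul_exp_mul_sq ha).const_mul α)
      ((integrableOn_Ioi_gaussianPDFReal_mul_exp_mul_sq ha).const_mul β),
    integral_const_mul, integral_const_mul,
    integral_Ioi_gaussianPDFReal_mul_sq_mul_exp_mul_sq ha,
    integral_Ioi_gaussianPDFReal_mul_exp_mul_sq ha]
  have : 1 - 2 * a ≠ 0 := by linarith
  field_simp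

/-- Closed-form evaluation of the limiting off-diagonal hidden-layer Hessian norm for a
1-hidden-layer ReLU network with cross-entropy loss: for `m ≥ 3` and `Z ∼ N(0,1)`,
`(E[(σ(Z)²/m² + 1/m) e^{σ(Z)²/m} 1(Z>0)])² (E[e^{σ(Z)²/m}])^{m−2}
  = ((m−1)²/(2^m (m−2)³ m)) (√(m/(m−2)) + 1)^{m−2}`. -/
theorem relu_ce_offdiag_closed_form (m : ℕ) (hm : 3 ≤ m) :
    (∫ z, ((max z 0) ^ 2 / (m : ℝ) ^ 2 + 1 / (m : ℝ)) *
          Real.exp ((max z 0) ^ 2 / (m : ℝ)) * (if 0 < z then (1 : ℝ) else 0)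
        ∂(gaussianReal 0 1)) ^ 2 *
      (∫ z, Real.exp ((max z 0) ^ 2 / (m : ℝ)) ∂(gaussianReal 0 1)) ^ (m - 2)
    = (((m : ℝ) - 1) ^ 2 / (2 ^ m * ((m : ℝ) - 2) ^ 3 * (m : ℝ))) *
        (Real.sqrt ((m : ℝ) / ((m : ℝ) - 2)) + 1) ^ (m - 2) := by
  have hm3 : (3 : ℝ) ≤ m := by exact_mod_cast hm
  have ha : (m : ℝ)⁻¹ < 1 / 2 := by rw [inv_lt_comm₀] <;> linarith
  have hquad :=
    integral_quadratic_relu_mul_exp_mul_ite_pos_gaussianReal ha ((m : ℝ) ^ 2)⁻¹ (1 / m)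
  have hexp := integral_exp_mul_relu_sq_gaussianReal ha
  simp only [inv_mul_eq_div] at hquad hexp
  have hs : (√(1 - 2 * (m : ℝ)⁻¹))⁻¹ = √(m / (m - 2)) := by
    rw [← sqrt_inv]
    congr 1
    field_simp
  set s := √((m : ℝ) / (m - 2))
  have hs2 : s ^ 2 = m / (m - 2) := sq_sqrt (div_nonneg (by linarith) (by linarith))
  have hpow : (2 : ℝ) ^ m = 2 ^ (m - 2) * 4 := by
    rw [← pow_sub_mul_pow 2 (by omega : 2 ≤ m)]
    norm_num
  rw [hquad, hexp, hs, hpow, div_pow, div_pow, mul_pow, hs2]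
  have : (m : ℝ) - 2 ≠ 0 := by linarith
  have : (m : ℝ) ≠ 0 := by linarith
  field_simp
  ring
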